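/- arXiv:1112.3599 — 4 statements merged into one kernel-verified Lean document; each statement's English description precedes it below -/
import Mathlib

section
/- Let K and S be real symmetric positive definite 2×2 matrices. Then the carry-over information satisfies K − K (S + K)⁻¹ K = (det K / det(S + K)) · S + (det S / det(S + K)) · K. -/
open Matrix

/-! Since `(S + K)⁻¹ = (det (S + K))⁻¹ • adjugate (S + K)`, the theorem is the identity
`det (S + K) • K - K * adjugate (S + K) * K = det K • S + det S • K` divided by `det (S + K)`,
which is positive because `S + K` is positive definite. That identity holds for all `2 × 2`
matrices over a commutative ring: the adjugate is additive there,
`det (S + K) = det S + det K + tr (adjugate S * K)` and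
`K * adjugate S * K = tr (adjugate S * K) • K - det K • S`. -/

theorem Matrix.det_add_smul_sub_mul_adjugate_add_mul_fin_two {R : Type*} [CommRing R]
    (K S : Matrix (Fin 2) (Fin 2) R) :
    (S + K).det • K - K * adjugate (S + K) * K = K.det • S + S.det • K := by
  ext i j
  fin_cases i <;> fin_cases j <;>
    simp only [det_fin_two, adjugate_fin_two, mul_apply, Fin.sum_univ_two, smul_apply,
      sub_apply, add_apply, of_apply, cons_val', cons_val_zero, cons_val_one, smul_eq_mul,
      Fin.zero_eta, Fin.mk_one, Fin.isValue] <;> ring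

/-- **Carry-over information as a weighted sum (2-D case).** For real symmetric
positive definite 2×2 matrices `K` and `S`,
`K - K (S + K)⁻¹ K = (det K / det(S + K)) • S + (det S / det(S + K)) • K`. -/
theorem carryover_weighted_sum_2D
    (K S : Matrix (Fin 2) (Fin 2) ℝ) (hK : K.PosDef) (hS : S.PosDef) :
    K - K * (S + K)⁻¹ * K =
      (K.det / (S + K).det) • S + (S.det / (S + K).det) • K := by
  have hdet : (S + K).det ≠ 0 := (hS.add hK).det_pos.ne'
  calc K - K * (S + K)⁻¹ * K
      = ((S + K).det)⁻¹ • ((S + K).det • K - K * adjugate (S + K) * K) := by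
        rw [inv_def, Ring.inverse_eq_inv, smul_sub, smul_smul, inv_mul_cancel₀ hdet, one_smul,
          mul_smul_comm, smul_mul_assoc]
    _ = (K.det / (S + K).det) • S + (S.det / (S + K).det) • K := by
        rw [det_add_smul_sub_mul_adjugate_add_mul_fin_two, smul_add, smul_smul, smul_smul,
          inv_mul_eq_div, inv_mul_eq_div]
end

section
/- Fix ψ : ℝ and λ > 0, and let C = λ·R(ψ), a rank-one 2×2 matrix with det C = 0. Let S be a real symmetric positive definite 2×2 matrix. Then the carry-over information is one-dimensional along the direction of movement: C − C (S + C)⁻¹ C = (det S / det(C + S)) · C. -/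
open Matrix Real

/-- The unit vector `u_φ = (cos φ, sin φ)ᵀ`. -/
noncomputable def uvec (φ : ℝ) : Fin 2 → ℝ := ![Real.cos φ, Real.sin φ]

/-- The rank-one matrix `R(φ) = u_φ u_φᵀ`. -/
noncomputable def Rmat (φ : ℝ) : Matrix (Fin 2) (Fin 2) ℝ :=
  Matrix.vecMulVec (uvec φ) (uvec φ)

namespace Matrix

variable {n R : Type*} [Fintype n] [CommRing R]

theorem vecMulVec_mul_mul_vecMulVec (a b : n → R)
    (M : Matrix n n R) :
    vecMulVec a b * M * vecMulVec a b = (b ⬝ᵥ M *ᵥ a) • vecMulVec a b := by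
  rw [vecMulVec_mul, vecMulVec_mul_vecMulVec, vecMulVec_smul, dotProduct_mulVec]

variable [DecidableEq n]

theorem det_sub_vecMulVec {B : Matrix n n R} (hB : IsUnit B.det) (a b : n → R) :
    (B - vecMulVec a b).det = B.det * (1 - b ⬝ᵥ B⁻¹ *ᵥ a) := by
  rw [sub_eq_add_neg, ← neg_vecMulVec, vecMulVec_eq Unit,
    det_add_replicateCol_mul_replicateRow hB, Matrix.mul_assoc, ← replicateCol_mulVec]
  simp [mulVec_neg, sub_eq_add_neg]

/-- Both sides are multiples of `abᵀ`, and the matrix determinant lemma applied to `S + abᵀ`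
identifies the coefficient `1 - bᵀ (S + abᵀ)⁻¹ a` with `det S / det (S + abᵀ)`. -/
theorem vecMulVec_sub_mul_inv_mul_vecMulVec {K : Type*} [Field K] (S : Matrix n n K)
    (a b : n → K) (h : (S + vecMulVec a b).det ≠ 0) :
    vecMulVec a b - vecMulVec a b * (S + vecMulVec a b)⁻¹ * vecMulVec a b =
      (S.det / (S + vecMulVec a b).det) • vecMulVec a b := by
  have hdet : S.det = (S + vecMulVec a b).det *
      (1 - b ⬝ᵥ (S + vecMulVec a b)⁻¹ *ᵥ a) := by
    rw [← det_sub_vecMulVec h.isUnit, add_sub_cancel_right]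
  rw [vecMulVec_mul_mul_vecMulVec, hdet, mul_div_cancel_left₀ _ h, sub_smul, one_smul]

end Matrix

/-- **One-dimensional carry-over information.** When the temporal information
`C = λ·R(ψ)` is rank one (so `det C = 0`) and `S` is symmetric positive
definite, the carry-over information is one-dimensional along the direction of
movement: `C - C (S + C)⁻¹ C = (det S / det(C + S)) • C`. -/
theorem carryover_rank_one (ψ l : ℝ) (hl : 0 < l)
    (C : Matrix (Fin 2) (Fin 2) ℝ) (hC : C = l • Rmat ψ)
    (S : Matrix (Fin 2) (Fin 2) ℝ) (hS : S.PosDef) :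
    C.det = 0 ∧
      C - C * (S + C)⁻¹ * C = (S.det / (C + S).det) • C := by
  have hC_vecMulVec : C = vecMulVec (l • uvec ψ) (uvec ψ) := by
    rw [hC, Rmat, smul_vecMulVec]
  have hC_psd : C.PosSemidef := by
    rw [hC, Rmat]
    simpa using (posSemidef_vecMulVec_self_star (uvec ψ)).smul hl.le
  have hdet : (S + C).det ≠ 0 := (hS.add_posSemidef hC_psd).det_pos.ne'
  refine ⟨hC_vecMulVec ▸ det_vecMulVec _ _, ?_⟩
  rw [add_comm C S]
  subst hC_vecMulVec
  exact vecMulVec_sub_mul_inv_mul_vecMulVec S _ _ hdet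
end

section
/- Fix ψ : ℝ and reals λ, ν, μ, η > 0. Let K = λ·R(ψ) + ν·R(ψ + π/2) and S = μ·R(ψ) + η·R(ψ + π/2). Then the carry-over information decouples along the two orthogonal directions: K − K (S + K)⁻¹ K = (λμ/(λ+μ))·R(ψ) + (ην/(η+ν))·R(ψ + π/2). -/
open Matrix Real

/-! `R(ψ)` and `R(ψ + π/2)` are complementary orthogonal idempotents, so every matrix
`a • R(ψ) + b • R(ψ + π/2)` is diagonal in the same basis and sums, products and inverses of
such matrices act on the two coefficients separately. The carry-over information is therefore
computed coefficientwise, where it is the scalar identity `l - l² / (l + μ) = l μ / (l + μ)`. -/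

section OrthogonalIdempotents

variable {R A : Type*} [CommRing R] [Ring A] [Algebra R A] {p q : A}

theorem smul_add_smul_mul_smul_add_smul (hp : IsIdempotentElem p) (hq : IsIdempotentElem q)
    (hpq : p * q = 0) (hqp : q * p = 0) (a b c d : R) :
    (a • p + b • q) * (c • p + d • q) = (a * c) • p + (b * d) • q := by
  simp only [add_mul, mul_add, smul_mul_smul_comm, hp.eq, hq.eq, hpq, hqp, smul_zero,
    add_zero, zero_add]

end OrthogonalIdempotents

section MatrixOrthogonalIdempotents

variable {n K : Type*} [Fintype n] [DecidableEq n] [Field K] {P Q : Matrix n n K}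

theorem Matrix.inv_smul_add_smul_of_orthogonal (hP : IsIdempotentElem P)
    (hQ : IsIdempotentElem Q) (hPQ : P * Q = 0) (hQP : Q * P = 0) (hsum : P + Q = 1)
    {a b : K} (ha : a ≠ 0) (hb : b ≠ 0) :
    (a • P + b • Q)⁻¹ = a⁻¹ • P + b⁻¹ • Q := by
  apply inv_eq_right_inv
  rw [smul_add_smul_mul_smul_add_smul hP hQ hPQ hQP, mul_inv_cancel₀ ha,
    mul_inv_cancel₀ hb, one_smul, one_smul, hsum]

theorem Matrix.carryover_smul_add_smul_of_orthogonal (hP : IsIdempotentElem P)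
    (hQ : IsIdempotentElem Q) (hPQ : P * Q = 0) (hQP : Q * P = 0) (hsum : P + Q = 1)
    {l ν μ η : K} (hlμ : l + μ ≠ 0) (hην : η + ν ≠ 0) :
    (l • P + ν • Q) -
        (l • P + ν • Q) * ((μ • P + η • Q) + (l • P + ν • Q))⁻¹ * (l • P + ν • Q) =
      (l * μ / (l + μ)) • P + (η * ν / (η + ν)) • Q := by
  have hSK : (μ • P + η • Q) + (l • P + ν • Q) = (l + μ) • P + (η + ν) • Q := by module
  have hl : l * μ / (l + μ) = l - l * (l + μ)⁻¹ * l := by field_simp; ring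
  have hν : η * ν / (η + ν) = ν - ν * (η + ν)⁻¹ * ν := by field_simp; ring
  rw [hSK, inv_smul_add_smul_of_orthogonal hP hQ hPQ hQP hsum hlμ hην,
    smul_add_smul_mul_smul_add_smul hP hQ hPQ hQP,
    smul_add_smul_mul_smul_add_smul hP hQ hPQ hQP, hl, hν]
  module

end MatrixOrthogonalIdempotents

theorem uvec_dotProduct_uvec (φ θ : ℝ) : uvec φ ⬝ᵥ uvec θ = cos (φ - θ) := by
  simp only [uvec, dotProduct, Fin.sum_univ_two, cons_val_zero, cons_val_one, cos_sub]

theorem Rmat_mul_Rmat (φ θ : ℝ) :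
    Rmat φ * Rmat θ = cos (φ - θ) • vecMulVec (uvec φ) (uvec θ) := by
  rw [Rmat, Rmat, vecMulVec_mul_vecMulVec, uvec_dotProduct_uvec, vecMulVec_smul]

theorem isIdempotentElem_Rmat (φ : ℝ) : IsIdempotentElem (Rmat φ) := by
  rw [IsIdempotentElem, Rmat_mul_Rmat, sub_self, cos_zero, one_smul, Rmat]

theorem Rmat_mul_Rmat_add_pi_div_two (φ : ℝ) : Rmat φ * Rmat (φ + π / 2) = 0 := by
  rw [Rmat_mul_Rmat, sub_add_cancel_left, cos_neg, cos_pi_div_two, zero_smul]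

theorem Rmat_add_pi_div_two_mul_Rmat (φ : ℝ) : Rmat (φ + π / 2) * Rmat φ = 0 := by
  rw [Rmat_mul_Rmat, add_sub_cancel_left, cos_pi_div_two, zero_smul]

theorem Rmat_add_Rmat_add_pi_div_two (φ : ℝ) : Rmat φ + Rmat (φ + π / 2) = 1 := by
  ext i j
  fin_cases i <;> fin_cases j <;>
    simp [Rmat, uvec, one_apply, cos_add_pi_div_two, sin_add_pi_div_two, ← sq, mul_comm (sin φ)]

/-- **Decoupled carry-over information for aligned eigenvectors.** If
`K = λ·R(ψ) + ν·R(ψ+π/2)` and `S = μ·R(ψ) + η·R(ψ+π/2)` with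
`λ, ν, μ, η > 0`, then the carry-over information decouples along the two
orthogonal directions:
`K - K (S + K)⁻¹ K = (λμ/(λ+μ))·R(ψ) + (ην/(η+ν))·R(ψ+π/2)`. -/
theorem carryover_decoupled (ψ l ν μ η : ℝ)
    (hl : 0 < l) (hν : 0 < ν) (hμ : 0 < μ) (hη : 0 < η)
    (K S : Matrix (Fin 2) (Fin 2) ℝ)
    (hKdef : K = l • Rmat ψ + ν • Rmat (ψ + π / 2))
    (hSdef : S = μ • Rmat ψ + η • Rmat (ψ + π / 2)) :
    K - K * (S + K)⁻¹ * K =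
      (l * μ / (l + μ)) • Rmat ψ + (η * ν / (η + ν)) • Rmat (ψ + π / 2) := by
  subst hKdef hSdef
  exact carryover_smul_add_smul_of_orthogonal (isIdempotentElem_Rmat ψ)
    (isIdempotentElem_Rmat _) (Rmat_mul_Rmat_add_pi_div_two ψ) (Rmat_add_pi_div_two_mul_Rmat ψ)
    (Rmat_add_Rmat_add_pi_div_two ψ) (by positivity) (by positivity)
end

section
/- Fix ψ : ℝ and reals λ, ν > 0. Let C = λ·R(ψ), D = ν·R(ψ + π/2), K = C + D, and let S be any real symmetric positive definite 2×2 matrix. Then the carry-over information satisfies K − K (S + K)⁻¹ K = ζ₁·C + ζ₂·D + κ·R(ψ, ψ + π/2), where ζ₁ = (1 + λ·u_ψᵀ (S + D)⁻¹ u_ψ)⁻¹, ζ₂ = (1 + ν·(u_ψ⊥)ᵀ (S + C)⁻¹ u_ψ⊥)⁻¹, and κ = −2λν · u_ψᵀ (S + C + D)⁻¹ u_ψ⊥. -/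
/-!
Write `C = l • u uᵀ`, `D = ν • w wᵀ`, `K = C + D` and `M = S + K`. Expanding the sandwich gives
`K M⁻¹ K = l² (uᵀM⁻¹u) uuᵀ + lν (uᵀM⁻¹w) (uwᵀ + wuᵀ) + ν² (wᵀM⁻¹w) wwᵀ`, the two mixed
coefficients agreeing because `M` is symmetric; this yields the `κ`-term. Since `M` is the rank-one
update `(S + D) + l uuᵀ`, Sherman–Morrison gives `(1 + l a) b = a` for `a = uᵀ(S + D)⁻¹u` and
`b = uᵀM⁻¹u`, i.e. `l - l² b = ζ₁ l`; symmetrically for `w`.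
-/

open Matrix Real

/-- The orthogonal unit vector `u_φ⊥ = u_{φ+π/2}`. -/
noncomputable def uvecPerp (φ : ℝ) : Fin 2 → ℝ := uvec (φ + π / 2)

/-- The coupling matrix `R(φ, φ+π/2) = (u_φ (u_φ⊥)ᵀ + u_φ⊥ u_φᵀ)/2`. -/
noncomputable def RmatCross (φ : ℝ) : Matrix (Fin 2) (Fin 2) ℝ :=
  (2:ℝ)⁻¹ • (Matrix.vecMulVec (uvec φ) (uvecPerp φ) +
    Matrix.vecMulVec (uvecPerp φ) (uvec φ))

section

variable {n : Type*} [Fintype n]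

namespace Matrix

variable {R : Type*} [CommRing R]

theorem vecMulVec_mul_mul_vecMulVec_s11 (u v w x : n → R) (P : Matrix n n R) :
    vecMulVec u v * P * vecMulVec w x = (v ⬝ᵥ P *ᵥ w) • vecMulVec u x := by
  rw [Matrix.mul_assoc, mul_vecMulVec, vecMulVec_mul_vecMulVec, vecMulVec_smul]

theorem smul_vecMulVec_add_smul_vecMulVec_mul_mul {P : Matrix n n R} (hP : P.IsSymm)
    (u w : n → R) (l ν : R) :
    (l • vecMulVec u u + ν • vecMulVec w w) * P * (l • vecMulVec u u + ν • vecMulVec w w) =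
      (l * l * (u ⬝ᵥ P *ᵥ u)) • vecMulVec u u +
      (l * ν * (u ⬝ᵥ P *ᵥ w)) • (vecMulVec u w + vecMulVec w u) +
      (ν * ν * (w ⬝ᵥ P *ᵥ w)) • vecMulVec w w := by
  have hwu : w ⬝ᵥ P *ᵥ u = u ⬝ᵥ P *ᵥ w := by
    rw [dotProduct_mulVec, ← mulVec_transpose, hP, dotProduct_comm]
  simp only [add_mul, mul_add, Matrix.smul_mul, Matrix.mul_smul, vecMulVec_mul_mul_vecMulVec_s11,
    smul_smul, hwu]
  module

end Matrix

variable {𝕜 : Type*} [Field 𝕜] [DecidableEq n]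

namespace Matrix

theorem sherman_morrison_dotProduct_mulVec {A : Matrix n n 𝕜} (u : n → 𝕜) (l : 𝕜)
    (hA : IsUnit A.det) (hM : IsUnit (A + l • vecMulVec u u).det) :
    (1 + l * (u ⬝ᵥ A⁻¹ *ᵥ u)) * (u ⬝ᵥ (A + l • vecMulVec u u)⁻¹ *ᵥ u) = u ⬝ᵥ A⁻¹ *ᵥ u := by
  have hx : (A + l • vecMulVec u u) *ᵥ (A⁻¹ *ᵥ u) = (1 + l * (u ⬝ᵥ A⁻¹ *ᵥ u)) • u := by
    rw [add_mulVec, mulVec_mulVec, mul_nonsing_inv _ hA, one_mulVec, smul_mulVec,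
      vecMulVec_mulVec, op_smul_eq_smul, add_smul, one_smul, mul_smul]
  calc (1 + l * (u ⬝ᵥ A⁻¹ *ᵥ u)) * (u ⬝ᵥ (A + l • vecMulVec u u)⁻¹ *ᵥ u)
      = u ⬝ᵥ (A + l • vecMulVec u u)⁻¹ *ᵥ ((1 + l * (u ⬝ᵥ A⁻¹ *ᵥ u)) • u) := by
        rw [mulVec_smul, dotProduct_smul, smul_eq_mul]
    _ = u ⬝ᵥ A⁻¹ *ᵥ u := by
        rw [← hx, mulVec_mulVec, nonsing_inv_mul _ hM, one_mulVec]

theorem sub_mul_self_mul_dotProduct_inv_add_smul_vecMulVec_mulVec {A : Matrix n n 𝕜}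
    (u : n → 𝕜) (l : 𝕜) (hA : IsUnit A.det) (hM : IsUnit (A + l • vecMulVec u u).det) :
    l - l * l * (u ⬝ᵥ (A + l • vecMulVec u u)⁻¹ *ᵥ u) = (1 + l * (u ⬝ᵥ A⁻¹ *ᵥ u))⁻¹ * l := by
  have hsm := sherman_morrison_dotProduct_mulVec u l hA hM
  have hne : 1 + l * (u ⬝ᵥ A⁻¹ *ᵥ u) ≠ 0 := by
    intro h0
    rw [h0, zero_mul, eq_comm] at hsm
    simp [hsm] at h0
  rw [eq_inv_mul_iff_mul_eq₀ hne]
  linear_combination (-l * l) * hsm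

end Matrix

noncomputable def carryover (K S : Matrix n n 𝕜) : Matrix n n 𝕜 :=
  K - K * (S + K)⁻¹ * K

theorem carryover_smul_vecMulVec_add_smul_vecMulVec {S : Matrix n n 𝕜} (hS : S.IsSymm)
    (u w : n → 𝕜) (l ν : 𝕜) (hSC : IsUnit (S + l • vecMulVec u u).det)
    (hSD : IsUnit (S + ν • vecMulVec w w).det)
    (hSK : IsUnit (S + l • vecMulVec u u + ν • vecMulVec w w).det) :
    carryover (l • vecMulVec u u + ν • vecMulVec w w) S =
      (1 + l * (u ⬝ᵥ (S + ν • vecMulVec w w)⁻¹ *ᵥ u))⁻¹ • l • vecMulVec u u +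
      (1 + ν * (w ⬝ᵥ (S + l • vecMulVec u u)⁻¹ *ᵥ w))⁻¹ • ν • vecMulVec w w -
      (l * ν * (u ⬝ᵥ (S + l • vecMulVec u u + ν • vecMulVec w w)⁻¹ *ᵥ w)) •
        (vecMulVec u w + vecMulVec w u) := by
  have hsymm : (S + l • vecMulVec u u + ν • vecMulVec w w)⁻¹.IsSymm :=
    ((hS.add (IsSymm.smul (transpose_vecMulVec u u) l)).add
      (IsSymm.smul (transpose_vecMulVec w w) ν)).inv
  have hζ₁ := sub_mul_self_mul_dotProduct_inv_add_smul_vecMulVec_mulVec u l hSD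
    (by rwa [add_right_comm] at hSK)
  have hζ₂ := sub_mul_self_mul_dotProduct_inv_add_smul_vecMulVec_mulVec w ν hSC hSK
  rw [add_right_comm] at hζ₁
  rw [carryover, ← add_assoc, smul_vecMulVec_add_smul_vecMulVec_mul_mul hsymm, smul_smul,
    smul_smul, ← hζ₁, ← hζ₂]
  module

end

/-- **Second geometrical interpretation of the carry-over information.** With
`C = λ·R(ψ)`, `D = ν·R(ψ+π/2)`, `K = C + D`, and `S` symmetric positive
definite, the carry-over information decomposes as
`K - K (S + K)⁻¹ K = ζ₁·C + ζ₂·D + κ·R(ψ, ψ+π/2)` with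
`ζ₁ = (1 + λ·u_ψᵀ (S + D)⁻¹ u_ψ)⁻¹`, `ζ₂ = (1 + ν·(u_ψ⊥)ᵀ (S + C)⁻¹ u_ψ⊥)⁻¹`,
and `κ = −2λν · u_ψᵀ (S + C + D)⁻¹ u_ψ⊥`. -/
theorem carryover_second_interpretation (ψ l ν : ℝ) (hl : 0 < l) (hν : 0 < ν)
    (C D K : Matrix (Fin 2) (Fin 2) ℝ)
    (hC : C = l • Rmat ψ) (hD : D = ν • Rmat (ψ + π / 2)) (hK : K = C + D)
    (S : Matrix (Fin 2) (Fin 2) ℝ) (hS : S.PosDef) :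
    K - K * (S + K)⁻¹ * K =
      (1 + l * (uvec ψ ⬝ᵥ ((S + D)⁻¹ *ᵥ uvec ψ)))⁻¹ • C +
      (1 + ν * (uvecPerp ψ ⬝ᵥ ((S + C)⁻¹ *ᵥ uvecPerp ψ)))⁻¹ • D +
      (-2 * l * ν * (uvec ψ ⬝ᵥ ((S + C + D)⁻¹ *ᵥ uvecPerp ψ))) • RmatCross ψ := by
  rw [Rmat] at hC
  rw [Rmat, ← uvecPerp] at hD
  subst hK hC hD
  have hpsd : ∀ {t : ℝ} (v : Fin 2 → ℝ), 0 < t → (t • vecMulVec v v).PosSemidef := fun v ht =>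
    (posSemidef_vecMulVec_self_star v).smul ht.le
  have hSC := hS.add_posSemidef (hpsd (uvec ψ) hl)
  have hSD := hS.add_posSemidef (hpsd (uvecPerp ψ) hν)
  have hSK := hSC.add_posSemidef (hpsd (uvecPerp ψ) hν)
  refine (carryover_smul_vecMulVec_add_smul_vecMulVec (isHermitian_iff_isSymm.mp hS.1)
    (uvec ψ) (uvecPerp ψ) l ν hSC.det_pos.ne'.isUnit hSD.det_pos.ne'.isUnit
    hSK.det_pos.ne'.isUnit).trans ?_
  rw [sub_eq_add_neg, ← neg_smul, RmatCross, smul_smul _ (2⁻¹ : ℝ)]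
  congr 2
  ring
end
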